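/- arXiv:1609.05488 — 6 statements merged into one kernel-verified Lean document; each statement's English description precedes it below -/
import Mathlib

section
/- The scalars θ_0, θ_1, …, θ_d are mutually distinct if and only if both (i) q^{2i} ≠ 1 for 1 ≤ i ≤ d, and (ii) a^2 is not among q^{2d−2}, q^{2d−4}, …, q^{2−2d}. -/
/-!
With `u = q ^ (2i - d)` and `v = q ^ (2j - d)` we have `θ i = a u + (a u)⁻¹`, and
`(a u + (a u)⁻¹) - (a v + (a v)⁻¹) = (u - v) (a² u v - 1) / (a u v)`.
So `θ i = θ j` exactly when `q ^ (2(i - j)) = 1` or `a² = q ^ (2d - 2(i + j))`.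
As `i ≠ j` range over `0, …, d`, the differences `|i - j|` sweep out `1, …, d`
and the sums `i + j` sweep out `1, …, 2d - 1`.
-/

theorem mul_add_inv_mul_inv_eq_iff {K : Type*} [Field K] {a u v : K} (ha : a ≠ 0)
    (hu : u ≠ 0) (hv : v ≠ 0) :
    a * u + a⁻¹ * u⁻¹ = a * v + a⁻¹ * v⁻¹ ↔ u = v ∨ a ^ 2 * (u * v) = 1 := by
  have factor : a * u + a⁻¹ * u⁻¹ - (a * v + a⁻¹ * v⁻¹)
      = (u - v) * (a ^ 2 * (u * v) - 1) / (a * u * v) := by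
    field_simp
    ring
  rw [← sub_eq_zero, factor, div_eq_zero_iff, mul_eq_zero, sub_eq_zero, sub_eq_zero]
  simp [ha, hu, hv]

theorem mul_zpow_add_inv_mul_zpow_eq_iff {K : Type*} [Field K] {a q : K} (ha : a ≠ 0)
    (hq : q ≠ 0) (d i j : ℤ) :
    a * q ^ (2 * i - d) + a⁻¹ * q ^ (d - 2 * i)
        = a * q ^ (2 * j - d) + a⁻¹ * q ^ (d - 2 * j) ↔
      (q ^ 2) ^ (i - j) = 1 ∨ a ^ 2 = q ^ (2 * d - 2 * (i + j)) := by
  have hinv (k : ℤ) : q ^ (d - 2 * k) = (q ^ (2 * k - d))⁻¹ := by rw [← zpow_neg, neg_sub]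
  rw [hinv, hinv, mul_add_inv_mul_inv_eq_iff ha (zpow_ne_zero _ hq) (zpow_ne_zero _ hq)]
  refine or_congr ?_ ?_
  · rw [show 2 * i - d = 2 * (i - j) + (2 * j - d) by ring, zpow_add₀ hq,
      mul_eq_right₀ (zpow_ne_zero _ hq), zpow_mul, zpow_two, sq]
  · rw [mul_eq_one_iff_eq_inv₀ (mul_ne_zero (zpow_ne_zero _ hq) (zpow_ne_zero _ hq)),
      ← zpow_add₀ hq, ← zpow_neg]
    ring_nf

theorem zpow_sub_ne_one_iff_pow_ne_one {M : Type*} [DivisionMonoid M] (x : M) (d : ℕ) :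
    (∀ i j : ℕ, i ≤ d → j ≤ d → i ≠ j → x ^ ((i : ℤ) - j) ≠ 1) ↔
      ∀ m : ℕ, 1 ≤ m → m ≤ d → x ^ m ≠ 1 := by
  constructor
  · intro h m hm hmd
    simpa using h m 0 hmd (Nat.zero_le d) (by omega)
  · intro h i j hi hj hij
    rcases Nat.lt_or_gt_of_ne hij with hlt | hgt
    · rw [show (i : ℤ) - j = -((j - i : ℕ) : ℤ) by omega, zpow_neg, zpow_natCast, inv_ne_one]
      exact h (j - i) (by omega) (by omega)
    · rw [show (i : ℤ) - j = ((i - j : ℕ) : ℤ) by omega, zpow_natCast]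
      exact h (i - j) (by omega) (by omega)

theorem forall_add_of_ne_iff_forall_Icc (P : ℕ → Prop) (d : ℕ) :
    (∀ i j : ℕ, i ≤ d → j ≤ d → i ≠ j → P (i + j)) ↔
      ∀ k : ℕ, 1 ≤ k → k ≤ 2 * d - 1 → P k := by
  constructor
  · intro h k hk hkd
    by_cases hk' : k ≤ d
    · simpa using h k 0 hk' (Nat.zero_le d) (by omega)
    · simpa [show d + (k - d) = k by omega] using h d (k - d) le_rfl (by omega) (by omega)
  · intro h i j hi hj hij
    exact h (i + j) (by omega) (by omega)

theorem stmt_1_general {F : Type*} [Field F] (a q : F) (ha : a ≠ 0) (hq : q ≠ 0)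
    (d : ℕ)
    (θ : ℕ → F) (hθ : ∀ i, θ i = a * q ^ (2*(i:ℤ) - d) + a⁻¹ * q ^ ((d:ℤ) - 2*i)) :
    (∀ i j, i ≤ d → j ≤ d → i ≠ j → θ i ≠ θ j) ↔
      ((∀ i : ℕ, 1 ≤ i → i ≤ d → q ^ (2*i) ≠ 1) ∧
       (∀ k : ℕ, 1 ≤ k → k ≤ 2*d - 1 → a ^ 2 ≠ q ^ (2*(d:ℤ) - 2*k))) := by
  have theta_ne_iff (i j : ℕ) : θ i ≠ θ j ↔
      (q ^ 2) ^ ((i : ℤ) - j) ≠ 1 ∧ a ^ 2 ≠ q ^ (2 * (d : ℤ) - 2 * ((i + j : ℕ) : ℤ)) := by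
    rw [hθ, hθ, Ne, mul_zpow_add_inv_mul_zpow_eq_iff ha hq, not_or, Nat.cast_add]
  simp only [pow_mul]
  rw [← zpow_sub_ne_one_iff_pow_ne_one,
    ← forall_add_of_ne_iff_forall_Icc (fun k : ℕ => a ^ 2 ≠ q ^ (2 * (d : ℤ) - 2 * k))]
  simp only [theta_ne_iff, ← forall_and]

theorem stmt_1 {F : Type*} [Field F] (a q : F) (ha : a ≠ 0) (hq : q ≠ 0)
    (hq4 : q ^ 4 ≠ 1) (d : ℕ)
    (θ : ℕ → F) (hθ : ∀ i, θ i = a * q ^ (2*(i:ℤ) - d) + a⁻¹ * q ^ ((d:ℤ) - 2*i)) :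
    (∀ i j, i ≤ d → j ≤ d → i ≠ j → θ i ≠ θ j) ↔
      ((∀ i : ℕ, 1 ≤ i → i ≤ d → q ^ (2*i) ≠ 1) ∧
       (∀ k : ℕ, 1 ≤ k → k ≤ 2*d - 1 → a ^ 2 ≠ q ^ (2*(d:ℤ) - 2*k))) :=
  stmt_1_general a q ha hq d θ hθ
end

section
/- Let nonzero scalars t_0, …, t_d in F be given. Then the following are equivalent: (i) for all 0 ≤ i, j ≤ d with |i − j| = 1, t_j/t_i + (q θ_i − q^{−1} θ_j)/(q^2 − q^{−2}) = 0; (ii) t_i/t_{i−1} = −a^{−1} q^{d−2i+1} for 1 ≤ i ≤ d; (iii) there exists a nonzero ε ∈ F such that t_i = ε (−1)^i a^{−i} q^{i(d−i)} for 0 ≤ i ≤ d. -/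
/-!
Writing `u = a q^{2k-d}` one has `θ_k = u + u⁻¹` and `θ_{k+1} = u q² + (u q²)⁻¹`, so both
normalized combinations of `θ_k, θ_{k+1}` in (i) are explicit: `(u q)⁻¹` and `u q`. Hence the
two conditions (i) attached to a pair `{k, k+1}` are the same condition, namely (ii) at `k + 1`.
A nowhere-zero sequence is determined up to a scalar by its consecutive ratios, and the
sequence `(-1)^i a^{-i} q^{i(d-i)}` has exactly the ratios prescribed in (ii).
-/

section FieldLemmas

variable {F : Type*} [Field F]

lemma sq_sub_inv_sq_ne_zero {q : F} (hq : q ≠ 0) (hq4 : q ^ 4 ≠ 1) : q ^ 2 - q⁻¹ ^ 2 ≠ 0 := by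
  intro h
  apply hq4
  field_simp at h
  linear_combination h

lemma add_inv_comb_mul_sq {q u : F} (hq : q ≠ 0) (hu : u ≠ 0) (hq2 : q ^ 2 - q⁻¹ ^ 2 ≠ 0) :
    (q * (u + u⁻¹) - q⁻¹ * (u * q ^ 2 + (u * q ^ 2)⁻¹)) / (q ^ 2 - q⁻¹ ^ 2) = (u * q)⁻¹ := by
  rw [div_eq_iff hq2]
  field_simp
  ring

lemma mul_sq_add_inv_comb {q u : F} (hq : q ≠ 0) (hu : u ≠ 0) (hq2 : q ^ 2 - q⁻¹ ^ 2 ≠ 0) :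
    (q * (u * q ^ 2 + (u * q ^ 2)⁻¹) - q⁻¹ * (u + u⁻¹)) / (q ^ 2 - q⁻¹ ^ 2) = u * q := by
  rw [div_eq_iff hq2]
  field_simp
  ring

lemma exists_eq_mul_iff_div_eq_div {t c : ℕ → F} {d : ℕ} (ht : ∀ i ≤ d, t i ≠ 0)
    (hc : ∀ i ≤ d, c i ≠ 0) :
    (∀ k < d, t (k + 1) / t k = c (k + 1) / c k) ↔ ∃ ε ≠ 0, ∀ i ≤ d, t i = ε * c i := by
  constructor
  · intro h
    have hconst : ∀ i ≤ d, t i / c i = t 0 / c 0 := by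
      intro i hi
      induction i with
      | zero => rfl
      | succ k ih =>
        rw [← ih (by omega)]
        have hk := h k (by omega)
        rw [div_eq_div_iff (ht k (by omega)) (hc k (by omega))] at hk
        rw [div_eq_div_iff (hc (k + 1) hi) (hc k (by omega))]
        linear_combination hk
    refine ⟨t 0 / c 0, div_ne_zero (ht 0 (by omega)) (hc 0 (by omega)), fun i hi => ?_⟩
    rw [← hconst i hi, div_mul_cancel₀ _ (hc i hi)]
  · rintro ⟨ε, hε, hεc⟩ k hk
    rw [hεc k hk.le, hεc (k + 1) hk, mul_div_mul_left _ _ hε]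

end FieldLemmas

lemma forall_adjacent_iff {P : ℕ → ℕ → Prop} {d : ℕ} :
    (∀ i j, i ≤ d → j ≤ d → (i = j + 1 ∨ j = i + 1) → P i j) ↔
      ∀ k < d, P k (k + 1) ∧ P (k + 1) k := by
  constructor
  · intro h k hk
    exact ⟨h k (k + 1) hk.le hk (Or.inr rfl), h (k + 1) k hk hk.le (Or.inl rfl)⟩
  · rintro h i j hi hj (rfl | rfl)
    · exact (h j (by omega)).2
    · exact (h i (by omega)).1

lemma forall_pos_le_iff {P : ℕ → Prop} {d : ℕ} :
    (∀ i, 1 ≤ i → i ≤ d → P i) ↔ ∀ k < d, P (k + 1) := by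
  constructor
  · exact fun h k hk => h (k + 1) (by omega) hk
  · intro h i hi hid
    obtain ⟨k, rfl⟩ : ∃ k, i = k + 1 := ⟨i - 1, by omega⟩
    exact h k (by omega)

section Theta

variable {F : Type*} [Field F] {a q : F} {d : ℕ} {θ : ℕ → F}

lemma theta_eq_add_inv (hθ : ∀ i, θ i = a * q ^ (2 * (i : ℤ) - d) + a⁻¹ * q ^ ((d : ℤ) - 2 * i))
    (i : ℕ) : θ i = a * q ^ (2 * (i : ℤ) - d) + (a * q ^ (2 * (i : ℤ) - d))⁻¹ := by
  rw [hθ, mul_inv, ← zpow_neg, neg_sub]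

lemma theta_succ_eq (hq : q ≠ 0)
    (hθ : ∀ i, θ i = a * q ^ (2 * (i : ℤ) - d) + a⁻¹ * q ^ ((d : ℤ) - 2 * i)) (k : ℕ) :
    θ (k + 1) = a * q ^ (2 * (k : ℤ) - d) * q ^ 2 + (a * q ^ (2 * (k : ℤ) - d) * q ^ 2)⁻¹ := by
  have hexp : 2 * ((k + 1 : ℕ) : ℤ) - d = 2 * (k : ℤ) - d + (2 : ℕ) := by push_cast; ring
  rw [theta_eq_add_inv hθ, hexp, zpow_add₀ hq, zpow_natCast, mul_assoc]

lemma inv_mul_zpow_succ_eq (hq : q ≠ 0) (k : ℕ) :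
    a⁻¹ * q ^ ((d : ℤ) - 2 * ((k + 1 : ℕ) : ℤ) + 1) = (a * q ^ (2 * (k : ℤ) - d) * q)⁻¹ := by
  have hexp : (d : ℤ) - 2 * ((k + 1 : ℕ) : ℤ) + 1 = -(2 * (k : ℤ) - d + 1) := by push_cast; ring
  rw [hexp, zpow_neg, zpow_add_one₀ hq]
  ring

lemma theta_comb_succ (ha : a ≠ 0) (hq : q ≠ 0) (hq2 : q ^ 2 - q⁻¹ ^ 2 ≠ 0)
    (hθ : ∀ i, θ i = a * q ^ (2 * (i : ℤ) - d) + a⁻¹ * q ^ ((d : ℤ) - 2 * i)) (k : ℕ) :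
    (q * θ k - q⁻¹ * θ (k + 1)) / (q ^ 2 - q⁻¹ ^ 2) =
      a⁻¹ * q ^ ((d : ℤ) - 2 * ((k + 1 : ℕ) : ℤ) + 1) := by
  rw [theta_eq_add_inv hθ k, theta_succ_eq hq hθ k, inv_mul_zpow_succ_eq hq k]
  exact add_inv_comb_mul_sq hq (mul_ne_zero ha (zpow_ne_zero _ hq)) hq2

lemma theta_comb_succ_swap (ha : a ≠ 0) (hq : q ≠ 0) (hq2 : q ^ 2 - q⁻¹ ^ 2 ≠ 0)
    (hθ : ∀ i, θ i = a * q ^ (2 * (i : ℤ) - d) + a⁻¹ * q ^ ((d : ℤ) - 2 * i)) (k : ℕ) :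
    (q * θ (k + 1) - q⁻¹ * θ k) / (q ^ 2 - q⁻¹ ^ 2) =
      (a⁻¹ * q ^ ((d : ℤ) - 2 * ((k + 1 : ℕ) : ℤ) + 1))⁻¹ := by
  rw [theta_eq_add_inv hθ k, theta_succ_eq hq hθ k, inv_mul_zpow_succ_eq hq k, inv_inv]
  exact mul_sq_add_inv_comb hq (mul_ne_zero ha (zpow_ne_zero _ hq)) hq2

end Theta

lemma succ_div_eq_of_lt {F : Type*} [Field F] {a q : F} (ha : a ≠ 0) (hq : q ≠ 0) {d k : ℕ}
    (hk : k < d) :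
    (-1) ^ (k + 1) * a⁻¹ ^ (k + 1) * q ^ ((k + 1) * (d - (k + 1))) /
        ((-1) ^ k * a⁻¹ ^ k * q ^ (k * (d - k))) =
      -(a⁻¹ * q ^ ((d : ℤ) - 2 * ((k + 1 : ℕ) : ℤ) + 1)) := by
  have hexp : (((k + 1) * (d - (k + 1)) : ℕ) : ℤ) =
      ((k * (d - k) : ℕ) : ℤ) + ((d : ℤ) - 2 * ((k + 1 : ℕ) : ℤ) + 1) := by
    push_cast [Nat.cast_sub hk, Nat.cast_sub hk.le]
    ring
  have hpow : q ^ ((k + 1) * (d - (k + 1))) =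
      q ^ (k * (d - k)) * q ^ ((d : ℤ) - 2 * ((k + 1 : ℕ) : ℤ) + 1) := by
    rw [← zpow_natCast, hexp, zpow_add₀ hq, zpow_natCast]
  rw [div_eq_iff (by simp [ha, hq]), hpow]
  ring

theorem stmt_4 {F : Type*} [Field F] (a q : F) (ha : a ≠ 0) (hq : q ≠ 0)
    (hq4 : q ^ 4 ≠ 1) (d : ℕ)
    (θ : ℕ → F) (hθ : ∀ i, θ i = a * q ^ (2*(i:ℤ) - d) + a⁻¹ * q ^ ((d:ℤ) - 2*i))
    (t : ℕ → F) (ht : ∀ i, i ≤ d → t i ≠ 0) :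
    ((∀ i j, i ≤ d → j ≤ d → (i = j + 1 ∨ j = i + 1) →
        t j / t i + (q * θ i - q⁻¹ * θ j) / (q^2 - (q⁻¹)^2) = 0) ↔
     (∀ i, 1 ≤ i → i ≤ d → t i / t (i-1) = -(a⁻¹ * q ^ ((d:ℤ) - 2*i + 1)))) ∧
    ((∀ i, 1 ≤ i → i ≤ d → t i / t (i-1) = -(a⁻¹ * q ^ ((d:ℤ) - 2*i + 1))) ↔
     (∃ ε : F, ε ≠ 0 ∧ ∀ i, i ≤ d → t i = ε * (-1)^i * (a⁻¹)^i * q ^ (i*(d-i)))) := by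
  have hq2 := sq_sub_inv_sq_ne_zero hq hq4
  have hii : (∀ i, 1 ≤ i → i ≤ d → t i / t (i-1) = -(a⁻¹ * q ^ ((d:ℤ) - 2*i + 1))) ↔
      ∀ k < d, t (k + 1) / t k = -(a⁻¹ * q ^ ((d : ℤ) - 2 * ((k + 1 : ℕ) : ℤ) + 1)) := by
    simp only [forall_pos_le_iff, Nat.add_sub_cancel]
  rw [hii, forall_adjacent_iff]
  constructor
  · refine forall₂_congr fun k _ => ?_
    rw [theta_comb_succ ha hq hq2 hθ, theta_comb_succ_swap ha hq hq2 hθ, add_eq_zero_iff_eq_neg,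
      add_eq_zero_iff_eq_neg, ← inv_neg, ← inv_div (t (k + 1)), inv_inj, and_self]
  · have hc : ∀ i ≤ d, (-1 : F) ^ i * a⁻¹ ^ i * q ^ (i * (d - i)) ≠ 0 := fun i _ => by
      simp [ha, hq]
    refine (forall₂_congr fun k hk => ?_).trans ((exists_eq_mul_iff_div_eq_div ht hc).trans ?_)
    · rw [succ_div_eq_of_lt ha hq hk]
    · simp only [mul_assoc]
end

section
/- Assume θ_0, …, θ_d are mutually distinct. Then: (i) if a = q^{d+1} then θ_0 = q + q^{−1}; (ii) if a = q^{−d−1} then θ_d = q + q^{−1}; (iii) if a ≠ q^{d+1} and a ≠ q^{−d−1} then θ_i ≠ q + q^{−1} for all 0 ≤ i ≤ d. -/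
theorem add_inv_eq_add_inv_iff {K : Type*} [Field K] {x y : K} (hx : x ≠ 0) (hy : y ≠ 0) :
    x + x⁻¹ = y + y⁻¹ ↔ x = y ∨ x = y⁻¹ := by
  constructor
  · intro h
    have hfactor : (x - y) * (x * y - 1) = 0 := by
      field_simp at h
      linear_combination h
    rcases mul_eq_zero.1 hfactor with h | h
    · exact .inl (sub_eq_zero.1 h)
    · exact .inr (eq_inv_of_mul_eq_one_left (sub_eq_zero.1 h))
  · rintro (rfl | rfl)
    · rfl
    · rw [inv_inv, add_comm]

/- `xᵢ + xᵢ⁻¹ = q + q⁻¹` forces `xᵢ = q` or `xᵢ = q⁻¹`. Since `xᵢ₊₁ = q² xᵢ`, the first gives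
`xᵢ₋₁ = q⁻¹` and the second `xᵢ₊₁ = q`, so `x + x⁻¹` repeats its value at a neighbouring index
unless `i` is the matching end point. -/
theorem add_inv_ne_of_mul_sq_succ {K : Type*} [Field K] {q : K} (hq : q ≠ 0) {d : ℕ}
    {x : ℕ → K} (hx : ∀ i, x i ≠ 0) (hstep : ∀ i, x (i + 1) = q ^ 2 * x i)
    (hdist : ∀ i j, i ≤ d → j ≤ d → i ≠ j → x i + (x i)⁻¹ ≠ x j + (x j)⁻¹)
    (h0 : x 0 ≠ q) (hd : x d ≠ q⁻¹) {i : ℕ} (hi : i ≤ d) : x i + (x i)⁻¹ ≠ q + q⁻¹ := by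
  have hsucc : ∀ j, x (j + 1) = q ↔ x j = q⁻¹ := by
    intro j
    rw [hstep]
    constructor
    · intro h
      exact eq_inv_of_mul_eq_one_left (mul_left_cancel₀ hq (by linear_combination h))
    · intro h
      rw [h, sq, mul_assoc, mul_inv_cancel₀ hq, mul_one]
  have hne : ∀ j, j < d → x j ≠ q⁻¹ := by
    intro j hj hxj
    refine hdist j (j + 1) hj.le hj (Nat.succ_ne_self j).symm ?_
    rw [(hsucc j).2 hxj, hxj, inv_inv, add_comm]
  intro h
  rcases (add_inv_eq_add_inv_iff (hx i) hq).1 h with hxi | hxi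
  · cases i with
    | zero => exact h0 hxi
    | succ j => exact hne j hi ((hsucc j).1 hxi)
  · rcases hi.lt_or_eq with hlt | rfl
    · exact hne i hlt hxi
    · exact hd hxi

theorem stmt_6_general {F : Type*} [Field F] (a q : F) (ha : a ≠ 0) (hq : q ≠ 0)
    (d : ℕ)
    (θ : ℕ → F) (hθ : ∀ i, θ i = a * q ^ (2*(i:ℤ) - d) + a⁻¹ * q ^ ((d:ℤ) - 2*i))
    (hdist : ∀ i j, i ≤ d → j ≤ d → i ≠ j → θ i ≠ θ j) :
    (a = q ^ (d+1) → θ 0 = q + q⁻¹) ∧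
    (a = q ^ (-(d:ℤ) - 1) → θ d = q + q⁻¹) ∧
    (a ≠ q ^ (d+1) → a ≠ q ^ (-(d:ℤ) - 1) → ∀ i, i ≤ d → θ i ≠ q + q⁻¹) := by
  set x : ℕ → F := fun i => a * q ^ (2 * (i : ℤ) - d) with hx_def
  have hθx : ∀ i, θ i = x i + (x i)⁻¹ := by
    intro i
    rw [hθ, mul_inv, ← zpow_neg, neg_sub]
  have hx : ∀ i, x i ≠ 0 := fun i => mul_ne_zero ha (zpow_ne_zero _ hq)
  have hstep : ∀ i, x (i + 1) = q ^ 2 * x i := by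
    intro i
    simp only [hx_def]
    rw [mul_left_comm, ← zpow_natCast, ← zpow_add₀ hq]
    push_cast
    ring_nf
  have hx0 : x 0 = q ↔ a = q ^ (d + 1) := by
    simp only [hx_def, Nat.cast_zero, mul_zero, zero_sub, zpow_neg, zpow_natCast]
    rw [mul_inv_eq_iff_eq_mul₀ (pow_ne_zero _ hq), pow_succ']
  have hxd : x d = q⁻¹ ↔ a = q ^ (-(d : ℤ) - 1) := by
    simp only [hx_def]
    rw [show 2 * (d : ℤ) - d = d by ring, ← eq_mul_inv_iff_mul_eq₀ (zpow_ne_zero _ hq),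
      ← zpow_neg, ← zpow_neg_one, ← zpow_add₀ hq, neg_add_eq_sub]
  refine ⟨fun h => ?_, fun h => ?_, fun h0 hd i hi => ?_⟩
  · rw [hθx, hx0.2 h]
  · rw [hθx, hxd.2 h, inv_inv, add_comm]
  · rw [hθx]
    refine add_inv_ne_of_mul_sq_succ hq hx hstep (fun i j hi hj hij => ?_)
      (mt hx0.1 h0) (mt hxd.1 hd) hi
    rw [← hθx, ← hθx]
    exact hdist i j hi hj hij

theorem stmt_6 {F : Type*} [Field F] (a q : F) (ha : a ≠ 0) (hq : q ≠ 0)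
    (hq4 : q ^ 4 ≠ 1) (d : ℕ)
    (θ : ℕ → F) (hθ : ∀ i, θ i = a * q ^ (2*(i:ℤ) - d) + a⁻¹ * q ^ ((d:ℤ) - 2*i))
    (hdist : ∀ i j, i ≤ d → j ≤ d → i ≠ j → θ i ≠ θ j) :
    (a = q ^ (d+1) → θ 0 = q + q⁻¹) ∧
    (a = q ^ (-(d:ℤ) - 1) → θ d = q + q⁻¹) ∧
    (a ≠ q ^ (d+1) → a ≠ q ^ (-(d:ℤ) - 1) → ∀ i, i ≤ d → θ i ≠ q + q⁻¹) :=
  stmt_6_general a q ha hq d θ hθ hdist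
end

section
/- Let A be a multiplicity-free linear operator on V with eigenvalues θ_0, …, θ_d and primitive idempotents E_0, …, E_d. Then for 0 ≤ i ≤ d, E_i = Σ_{j=i}^d (A − θ_0 I)(A − θ_1 I)⋯(A − θ_{j−1} I) / ((θ_i − θ_0)⋯(θ_i − θ_{i−1})(θ_i − θ_{i+1})⋯(θ_i − θ_j)). -/
/-! Because the `E i` are orthogonal idempotents summing to `1`, every polynomial `p` satisfies
`p(A) = ∑ p(θ m) • E m`; hence `E i = L(A)` for the Lagrange basis polynomial `L` of the nodes
`θ 0, …, θ d` at `θ i`. The sum in the statement is the Newton form of `L`: its partial sum up to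
`J` telescopes to the Lagrange basis polynomial of the nodes `θ 0, …, θ J`. -/

open Finset Polynomial Lagrange

section OrthogonalIdempotents

variable {R S ι : Type*} [CommRing R] [Ring S] [Algebra R S]

theorem aeval_mul_eq_eval_smul_of_mul_eq_smul {a e : S} {μ : R} (h : a * e = μ • e) (p : R[X]) :
    aeval a p * e = p.eval μ • e := by
  have := Module.End.aeval_apply_of_mem_apply_eq_smul (f := Algebra.lmul R S a) (p := p) h
  rwa [aeval_algHom_apply] at this

theorem aeval_sum_smul_eq_sum_eval_smul [DecidableEq ι] {s : Finset ι} {E : ι → S} (θ : ι → R)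
    (horth : ∀ i ∈ s, ∀ j ∈ s, E i * E j = if i = j then E i else 0)
    (hsum : ∑ i ∈ s, E i = 1) (p : R[X]) :
    aeval (∑ i ∈ s, θ i • E i) p = ∑ i ∈ s, p.eval (θ i) • E i := by
  have hA : ∀ j ∈ s, (∑ i ∈ s, θ i • E i) * E j = θ j • E j := fun j hj => by
    simp only [Finset.sum_mul, smul_mul_assoc]
    rw [sum_eq_single j (fun i hi hij => by rw [horth i hi j hj, if_neg hij, smul_zero])
      (absurd hj), horth j hj j hj, if_pos rfl]
  calc aeval (∑ i ∈ s, θ i • E i) p = aeval (∑ i ∈ s, θ i • E i) p * ∑ j ∈ s, E j := by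
        rw [hsum, mul_one]
    _ = ∑ i ∈ s, p.eval (θ i) • E i := by
        rw [Finset.mul_sum]
        exact sum_congr rfl fun j hj => aeval_mul_eq_eval_smul_of_mul_eq_smul (hA j hj) p

end OrthogonalIdempotents

section Newton

variable {F ι : Type*} [Field F] [DecidableEq ι]

theorem Lagrange.basis_eq_C_nodalWeight_mul_nodal_erase (s : Finset ι) (v : ι → F) (i : ι) :
    Lagrange.basis s v i = C (nodalWeight s v i) * nodal (s.erase i) v := by
  simp_rw [Lagrange.basis, basisDivisor, nodalWeight, prod_mul_distrib, map_prod, nodal]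

theorem Lagrange.sum_nodalWeight_smul_nodal_range_eq_basis {θ : ℕ → F} {i J : ℕ} (hiJ : i ≤ J)
    (hθ : Set.InjOn θ (range (J + 1))) :
    ∑ j ∈ Icc i J, nodalWeight (range (j + 1)) θ i • nodal (range j) θ =
      Lagrange.basis (range (J + 1)) θ i := by
  induction J, hiJ using Nat.le_induction with
  | base =>
    rw [Icc_self, sum_singleton, basis_eq_C_nodalWeight_mul_nodal_erase, smul_eq_C_mul,
      range_add_one, erase_insert notMem_range_self]
  | succ J hiJ ih =>
    have hθ' : θ i ≠ θ (J + 1) := fun h => by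
      have := hθ (by simp only [coe_range, Set.mem_Iio]; omega) (by simp) h
      omega
    have hweight : nodalWeight (range (J + 1 + 1)) θ i =
        (θ i - θ (J + 1))⁻¹ * nodalWeight (range (J + 1)) θ i := by
      rw [nodalWeight, range_add_one (n := J + 1), erase_insert_of_ne (by omega),
        prod_insert (by simp), nodalWeight]
    have hnodal : nodal ((range (J + 1 + 1)).erase i) θ =
        (X - C (θ (J + 1))) * nodal ((range (J + 1)).erase i) θ := by
      rw [range_add_one (n := J + 1), erase_insert_of_ne (by omega), nodal_insert_eq_nodal (by simp)]
    have hinv : C (θ i - θ (J + 1))⁻¹ * (C (θ i) - C (θ (J + 1))) = 1 := by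
      rw [← map_sub, ← map_mul, inv_mul_cancel₀ (sub_ne_zero.2 hθ'), map_one]
    rw [sum_Icc_succ_top (by omega), ih (hθ.mono (by simp)), basis_eq_C_nodalWeight_mul_nodal_erase,
      basis_eq_C_nodalWeight_mul_nodal_erase, hweight, hnodal, smul_eq_C_mul,
      nodal_eq_mul_nodal_erase (mem_range.2 (by omega : i < J + 1)), map_mul]
    linear_combination
      -(C (nodalWeight (range (J + 1)) θ i) * nodal ((range (J + 1)).erase i) θ) * hinv

end Newton

theorem stmt_11_general {F V : Type*} [Field F] [AddCommGroup V] [Module F V]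
    (d : ℕ)
    (A : Module.End F V) (θ : ℕ → F)
    (hθ : ∀ i j, i ≤ d → j ≤ d → i ≠ j → θ i ≠ θ j)
    (E : ℕ → Module.End F V)
    (hEE : ∀ i j, i ≤ d → j ≤ d → E i * E j = if i = j then E i else 0)
    (hsum : ∑ i ∈ Finset.range (d+1), E i = 1)
    (hAE : A = ∑ i ∈ Finset.range (d+1), θ i • E i) :
    ∀ i, i ≤ d →
      E i = ∑ j ∈ Finset.Icc i d,
        (∏ k ∈ (Finset.range (j+1)).erase i, (θ i - θ k))⁻¹ •
          Polynomial.aeval A (∏ k ∈ Finset.range j, (Polynomial.X - Polynomial.C (θ k))) := by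
  intro i hi
  have hinj : Set.InjOn θ (range (d + 1)) := fun j hj k hk => by
    simp only [coe_range, Set.mem_Iio] at hj hk
    exact not_imp_not.1 (hθ j k (by omega) (by omega))
  have horth : ∀ j ∈ range (d + 1), ∀ k ∈ range (d + 1), E j * E k = if j = k then E j else 0 :=
    fun j hj k hk => hEE j k (Nat.lt_succ_iff.1 (mem_range.1 hj)) (Nat.lt_succ_iff.1 (mem_range.1 hk))
  have hi' : i ∈ range (d + 1) := mem_range.2 (by omega)
  calc E i = ∑ m ∈ range (d + 1), (Lagrange.basis (range (d + 1)) θ i).eval (θ m) • E m := by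
        rw [sum_eq_single i (fun m hm hmi => by rw [eval_basis_of_ne hmi.symm hm, zero_smul])
          (absurd hi'), eval_basis_self hinj hi', one_smul]
    _ = aeval A (∑ j ∈ Icc i d, nodalWeight (range (j + 1)) θ i • nodal (range j) θ) := by
        rw [sum_nodalWeight_smul_nodal_range_eq_basis hi hinj, hAE,
          aeval_sum_smul_eq_sum_eval_smul θ horth hsum]
    _ = _ := by
        simp only [map_sum, map_smul, nodalWeight, prod_inv_distrib, nodal]

theorem stmt_11 {F V : Type*} [Field F] [AddCommGroup V] [Module F V]
    [FiniteDimensional F V] (d : ℕ) (hdim : Module.finrank F V = d + 1)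
    (A : Module.End F V) (θ : ℕ → F)
    (hθ : ∀ i j, i ≤ d → j ≤ d → i ≠ j → θ i ≠ θ j)
    (E : ℕ → Module.End F V)
    (hEE : ∀ i j, i ≤ d → j ≤ d → E i * E j = if i = j then E i else 0)
    (hsum : ∑ i ∈ Finset.range (d+1), E i = 1)
    (hAE : A = ∑ i ∈ Finset.range (d+1), θ i • E i)
    (hrank : ∀ i, i ≤ d → Module.finrank F (LinearMap.range (E i)) = 1) :
    ∀ i, i ≤ d →
      E i = ∑ j ∈ Finset.Icc i d,
        (∏ k ∈ (Finset.range (j+1)).erase i, (θ i - θ k))⁻¹ •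
          Polynomial.aeval A (∏ k ∈ Finset.range j, (Polynomial.X - Polynomial.C (θ k))) :=
  stmt_11_general d A θ hθ E hEE hsum hAE
end

section
/- For 0 ≤ j ≤ d, a^{2j} q^{2j(j−d)} = Σ_{i=0}^d (−1)^i a^i q^{i(i−d+1)} (θ_j − θ_0)(θ_j − θ_1)⋯(θ_j − θ_{i−1}) / (q^2; q^2)_i, where (x; t)_n = (1−x)(1−xt)⋯(1−x t^{n−1}). -/
/-- The `t`-shifted factorial `(x; t)_n = (1-x)(1-xt)⋯(1-x t^{n-1})`. -/
def qPoch {F : Type*} [Field F] (x t : F) (n : ℕ) : F :=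
  ∏ k ∈ Finset.range n, (1 - x * t ^ k)

namespace Stmt13
variable {F : Type*} [Field F]

lemma qPoch_zero (x t : F) : qPoch x t 0 = 1 := by simp [qPoch]
lemma qPoch_succ (x t : F) (n : ℕ) : qPoch x t (n+1) = qPoch x t n * (1 - x * t ^ n) :=
  Finset.prod_range_succ _ _

def qb (x : F) : ℕ → ℕ → F
  | _, 0 => 1
  | 0, _+1 => 0
  | j+1, i+1 => qb x j (i+1) + x ^ (j-i) * qb x j i

lemma qb_zero (x : F) (j : ℕ) : qb x j 0 = 1 := by cases j <;> rfl

lemma qb_gt (x : F) : ∀ j i, j < i → qb x j i = 0 := by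
  intro j
  induction j with
  | zero => intro i hi; match i, hi with | i+1, _ => rfl
  | succ j ih =>
    intro i hi
    match i, hi with
    | i+1, hi =>
      show qb x j (i+1) + x ^ (j-i) * qb x j i = 0
      rw [ih (i+1) (by omega), ih i (by omega)]
      ring

lemma qb_mul (x : F) : ∀ j i, i ≤ j → qb x j i * (qPoch x x i * qPoch x x (j-i)) = qPoch x x j := by
  intro j
  induction j with
  | zero => intro i hi; interval_cases i; simp [qb_zero, qPoch_zero]
  | succ j ih =>
    intro i hi
    match i with
    | 0 => simp [qb_zero, qPoch_zero]
    | i+1 =>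
      rcases eq_or_lt_of_le (Nat.succ_le_succ_iff.mp hi) with h | h
      · subst h
        show (qb x i (i+1) + x ^ (i-i) * qb x i i) * (qPoch x x (i+1) * qPoch x x (i+1-(i+1))) = _
        rw [qb_gt x i (i+1) (by omega)]
        have h2 := ih i le_rfl
        simp only [Nat.sub_self, qPoch_zero, mul_one, pow_zero, zero_add, one_mul] at h2 ⊢
        rw [qPoch_succ]
        linear_combination (1 - x * x ^ i) * h2
      · -- i < j
        show (qb x j (i+1) + x ^ (j-i) * qb x j i) * (qPoch x x (i+1) * qPoch x x (j+1-(i+1))) = _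
        have e1 : j + 1 - (i+1) = j - i := by omega
        have e2 : j - i = (j - (i+1)) + 1 := by omega
        have h1 := ih (i+1) h
        have h2 := ih i (by omega)
        have hZ : x * x ^ (j - (i+1)) = x ^ (j-i) := by
          rw [← pow_succ', ← e2]
        have hY : x * x ^ i = x ^ (i+1) := (pow_succ' x i).symm
        have hW : x * x ^ j = x ^ (j+1) := (pow_succ' x j).symm
        have hXY : x ^ (j-i) * x ^ (i+1) = x ^ (j+1) := by
          rw [← pow_add]; congr 1; omega
        rw [e1, e2, qPoch_succ, qPoch_succ x x (j - (i+1)), qPoch_succ x x j, hZ, hY, hW]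
        rw [e2, qPoch_succ, hZ] at h2
        rw [qPoch_succ, hY] at h1
        set A := qb x j (i+1)
        set B := qb x j i
        set Pi := qPoch x x i
        set Pm := qPoch x x (j - (i+1))
        set Pj := qPoch x x j
        linear_combination (1 - x ^ (j-i)) * h1 + x ^ (j-i) * (1 - x ^ (i+1)) * h2 - Pj * hXY + B*Pi*Pm*(1 - x*x^i)*(1 - x^(j-i))*hZ

lemma gauss : ∀ i : ℕ, i*i = 2 * (∑ k ∈ Finset.range i, k) + i := by
  intro i
  induction i with
  | zero => simp
  | succ n ih =>
    rw [Finset.sum_range_succ]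
    nlinarith [ih]

lemma prodA (x : F) (j : ℕ) : ∀ i, i ≤ j →
    (∏ k ∈ Finset.range i, (x^j - x^k)) * qPoch x x (j-i)
      = (-1)^i * (∏ k ∈ Finset.range i, x^k) * qPoch x x j := by
  intro i
  induction i with
  | zero => simp
  | succ i ih =>
    intro hij
    have IH := ih (by omega)
    have e1 : (x:F)^j = x^i * x^(j-i) := by rw [← pow_add]; congr 1; omega
    have h : j - i = (j-(i+1)) + 1 := by omega
    have e2 : qPoch x x (j-i) = qPoch x x (j-(i+1)) * (1 - x^(j-i)) := by
      rw [h, qPoch_succ, ← pow_succ', ← h]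
    rw [e2] at IH
    rw [Finset.prod_range_succ, Finset.prod_range_succ]
    have h1 : j - (i+1) = j - i - 1 := by omega
    rw [show j - (i+1) = (j-(i+1)) from rfl]
    linear_combination (-(x^i)) * IH + ((∏ k ∈ Finset.range i, (x^j - x^k)) * qPoch x x (j-(i+1))) * e1

lemma key (x u : F) (hx : x ≠ 0) : ∀ j : ℕ,
    ∑ i ∈ Finset.range (j+1), qb x j i * x ^ ((i:ℤ)*((i:ℤ) - (j:ℤ))) * u ^ (j-i) *
      ∏ k ∈ Finset.range i, (1 - u * (x ^ k)⁻¹) = 1 := by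
  intro j
  induction j with
  | zero => simp [qb_zero]
  | succ j ih =>
    have hπ : ∀ i : ℕ, (∏ k ∈ Finset.range (i+1), (1 - u * (x ^ k)⁻¹))
        = (∏ k ∈ Finset.range i, (1 - u * (x ^ k)⁻¹)) * (1 - u * (x ^ i)⁻¹) :=
      fun i => Finset.prod_range_succ _ _
    set h : ℕ → F := fun i => qb x j i * x ^ ((i:ℤ)*((i:ℤ)-(j:ℤ)-1)) * u ^ (j+1-i) *
      ∏ k ∈ Finset.range i, (1 - u * (x ^ k)⁻¹) with hh
    set g : ℕ → F := fun i => x^(j-i) * qb x j i * x ^ (((i:ℤ)+1)*((i:ℤ)-(j:ℤ))) * u ^ (j-i) *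
      ∏ k ∈ Finset.range (i+1), (1 - u * (x ^ k)⁻¹) with hg
    have step1 : ∑ i ∈ Finset.range (j+1+1),
        qb x (j+1) i * x ^ ((i:ℤ)*((i:ℤ) - ((j+1:ℕ):ℤ))) * u ^ (j+1-i) *
          ∏ k ∈ Finset.range i, (1 - u * (x ^ k)⁻¹)
        = (∑ i ∈ Finset.range (j+1), (h (i+1) + g i)) + h 0 := by
      rw [Finset.sum_range_succ']
      congr 1
      · refine Finset.sum_congr rfl fun i hi => ?_
        show (qb x j (i+1) + x ^ (j-i) * qb x j i) * _ * _ * _ = _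
        simp only [hh, hg]
        have E1 : (x:F) ^ (((i+1:ℕ):ℤ)*(((i+1:ℕ):ℤ) - ((j+1:ℕ):ℤ)))
            = x ^ (((i+1:ℕ):ℤ)*(((i+1:ℕ):ℤ)-(j:ℤ)-1)) := by congr 1; push_cast; ring
        have E2 : (x:F) ^ (((i+1:ℕ):ℤ)*(((i+1:ℕ):ℤ)-(j:ℤ)-1))
            = x ^ (((i:ℤ)+1)*((i:ℤ)-(j:ℤ))) := by congr 1; push_cast; ring
        have E3 : j + 1 - (i+1) = j - i := by omega
        rw [E1, E2, E3]
        ring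
      · simp [hh, qb_zero]
    have step2 : (∑ i ∈ Finset.range (j+1), h (i+1)) + h 0 = ∑ i ∈ Finset.range (j+1), h i := by
      rw [← Finset.sum_range_succ', Finset.sum_range_succ]
      have : h (j+1) = 0 := by simp [hh, qb_gt x j (j+1) (by omega)]
      rw [this, add_zero]
    have step3 : ∀ i ∈ Finset.range (j+1), h i + g i =
        qb x j i * x ^ ((i:ℤ)*((i:ℤ) - (j:ℤ))) * u ^ (j-i) *
          ∏ k ∈ Finset.range i, (1 - u * (x ^ k)⁻¹) := by
      intro i hi
      have hij : i ≤ j := by simpa [Nat.lt_succ_iff] using Finset.mem_range.mp hi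
      have eu : u ^ (j+1-i) = u ^ (j-i) * u := by
        rw [← pow_succ]; congr 1; omega
      have ex1 : (x:F) ^ ((i:ℤ)*((i:ℤ)-(j:ℤ)-1)) = x ^ ((i:ℤ)*((i:ℤ)-(j:ℤ))) * (x ^ i)⁻¹ := by
        have e : (i:ℤ)*((i:ℤ)-(j:ℤ)-1) = (i:ℤ)*((i:ℤ)-(j:ℤ)) - (i:ℤ) := by ring
        rw [e, zpow_sub₀ hx, zpow_natCast, div_eq_mul_inv]
      have ex2 : (x:F) ^ (j-i) * x ^ (((i:ℤ)+1)*((i:ℤ)-(j:ℤ))) = x ^ ((i:ℤ)*((i:ℤ)-(j:ℤ))) := by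
        have e : (x:F) ^ (j-i) = x ^ (((j:ℤ)-(i:ℤ))) := by
          rw [← zpow_natCast, Nat.cast_sub hij]
        rw [e, ← zpow_add₀ hx]
        congr 1; ring
      simp only [hh, hg, hπ, eu, ex1]
      linear_combination (qb x j i * u^(j-i) *
        (∏ k ∈ Finset.range i, (1 - u * (x ^ k)⁻¹)) * (1 - u * (x^i)⁻¹)) * ex2
    rw [step1, Finset.sum_add_distrib, add_right_comm, step2, ← Finset.sum_add_distrib,
      Finset.sum_congr rfl step3]
    exact ih
lemma factor_aux (a s A B : F) (ha : a ≠ 0) (hs : s ≠ 0) (hA : A ≠ 0) (hB : B ≠ 0) :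
    (a * (A * s⁻¹) + a⁻¹ * (s * A⁻¹)) - (a * (B * s⁻¹) + a⁻¹ * (s * B⁻¹))
      = (A - B) * (a * s⁻¹ * (1 - (a⁻¹ * a⁻¹ * (s * s * A⁻¹)) * B⁻¹)) := by
  have haa : a * a⁻¹ = 1 := mul_inv_cancel₀ ha
  have hss : s * s⁻¹ = 1 := mul_inv_cancel₀ hs
  have hAA : A * A⁻¹ = 1 := mul_inv_cancel₀ hA
  have hBB : B * B⁻¹ = 1 := mul_inv_cancel₀ hB
  linear_combination (-((A⁻¹-B⁻¹) * a⁻¹ * s)) * haa + (-((A⁻¹-B⁻¹)*a⁻¹*s*a*a⁻¹)) * hss +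
    (a*a⁻¹^2*s^2*s⁻¹*B⁻¹) * hAA + (-(a*a⁻¹^2*s^2*s⁻¹*A⁻¹)) * hBB

end Stmt13

open Stmt13 in
theorem stmt_13 {F : Type*} [Field F] (a q : F) (ha : a ≠ 0) (hq : q ≠ 0)
    (hq4 : q ^ 4 ≠ 1) (d : ℕ)
    (hqi : ∀ i : ℕ, 1 ≤ i → i ≤ d → q ^ (2*i) ≠ 1)
    (θ : ℕ → F) (hθ : ∀ i, θ i = a * q ^ (2*(i:ℤ) - d) + a⁻¹ * q ^ ((d:ℤ) - 2*i)) :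
    ∀ j, j ≤ d →
      a^(2*j) * q ^ (2*(j:ℤ) * ((j:ℤ) - d)) =
        ∑ i ∈ Finset.range (d+1),
          (-1:F)^i * a^i * q ^ ((i:ℤ) * ((i:ℤ) - d + 1)) *
            (∏ k ∈ Finset.range i, (θ j - θ k)) / qPoch (q^2) (q^2) i := by
  intro j hj
  have hx : (q^2 : F) ≠ 0 := pow_ne_zero _ hq
  set x : F := q^2 with hxdef
  have hP : ∀ n, n ≤ d → qPoch x x n ≠ 0 := by
    intro n hn
    show (∏ k ∈ Finset.range n, (1 - x * x ^ k)) ≠ 0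
    refine Finset.prod_ne_zero_iff.mpr fun k hk => ?_
    have hk' : k + 1 ≤ d := by have := Finset.mem_range.mp hk; omega
    have e : x * x^k = q^(2*(k+1)) := by rw [hxdef, ← pow_succ', ← pow_mul]
    rw [e]
    exact sub_ne_zero.mpr fun hcon => hqi (k+1) (by omega) hk' hcon.symm
  set s : F := q^(d:ℤ) with hsdef
  have hs : s ≠ 0 := zpow_ne_zero _ hq
  set u : F := (a^2)⁻¹ * x^(d-j) with hudef
  have hfac : ∀ k : ℕ, θ j - θ k = (x^j - x^k) * (a * s⁻¹ * (1 - u * (x^k)⁻¹)) := by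
    intro k
    have hA : (x:F)^j ≠ 0 := pow_ne_zero _ hx
    have hB : (x:F)^k ≠ 0 := pow_ne_zero _ hx
    have f1 : ∀ m : ℕ, q ^ (2*(m:ℤ) - (d:ℤ)) = x^m * s⁻¹ := by
      intro m
      rw [zpow_sub₀ hq, div_eq_mul_inv, hsdef]
      congr 1
      rw [show (2*(m:ℤ)) = ((2*m : ℕ) : ℤ) by push_cast; ring, zpow_natCast, hxdef, pow_mul]
    have f2 : ∀ m : ℕ, q ^ ((d:ℤ) - 2*(m:ℤ)) = s * (x^m)⁻¹ := by
      intro m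
      rw [zpow_sub₀ hq, hsdef, div_eq_mul_inv]
      congr 1
      rw [show (2*(m:ℤ)) = ((2*m : ℕ) : ℤ) by push_cast; ring, zpow_natCast, hxdef, pow_mul]
    have hxd : (x:F)^d = s * s := by
      rw [hsdef, hxdef, ← pow_mul, ← zpow_natCast q (2*d), ← zpow_add₀ hq]
      congr 1
      push_cast; ring
    have fu : u = a⁻¹ * a⁻¹ * (s * s * (x^j)⁻¹) := by
      rw [hudef, ← hxd, pow_two, mul_inv]
      congr 1
      rw [eq_mul_inv_iff_mul_eq₀ hA, ← pow_add]
      congr 1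
      omega
    rw [hθ j, hθ k, f1 j, f1 k, f2 j, f2 k, fu]
    exact factor_aux a s (x^j) (x^k) ha hs hA hB
  -- vanishing beyond j
  have hvan : ∀ i ∈ Finset.range (d+1), i ∉ Finset.range (j+1) →
      (-1:F)^i * a^i * q ^ ((i:ℤ) * ((i:ℤ) - d + 1)) *
        (∏ k ∈ Finset.range i, (θ j - θ k)) / qPoch x x i = 0 := by
    intro i _ hi2
    have hji : j < i := by
      simp only [Finset.mem_range, not_lt] at hi2; omega
    have : (∏ k ∈ Finset.range i, (θ j - θ k)) = 0 :=
      Finset.prod_eq_zero (Finset.mem_range.mpr hji) (sub_self _)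
    rw [this, mul_zero, zero_div]
  -- per-term identity
  have hterm : ∀ i ∈ Finset.range (j+1),
      (-1:F)^i * a^i * q ^ ((i:ℤ) * ((i:ℤ) - d + 1)) *
        (∏ k ∈ Finset.range i, (θ j - θ k)) / qPoch x x i
      = (a^(2*j) * q ^ (2*(j:ℤ) * ((j:ℤ) - d))) *
        (Stmt13.qb x j i * x ^ ((i:ℤ)*((i:ℤ) - (j:ℤ))) * u ^ (j-i) *
          ∏ k ∈ Finset.range i, (1 - u * (x ^ k)⁻¹)) := by
    intro i hi
    have hij : i ≤ j := by have := Finset.mem_range.mp hi; omega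
    have hid : i ≤ d := le_trans hij hj
    set N : ℕ := ∑ k ∈ Finset.range i, k with hN
    have h2N : i*i = 2*N + i := Stmt13.gauss i
    -- scalar power identity
    have hscalar : a^i * q ^ ((i:ℤ) * ((i:ℤ) - d + 1)) * (a*s⁻¹)^i * x^N
        = (a^(2*j) * q ^ (2*(j:ℤ) * ((j:ℤ) - d))) *
          (x ^ ((i:ℤ)*((i:ℤ) - (j:ℤ))) * u ^ (j-i)) := by
      have l1 : (a*s⁻¹)^i = a^i * (q^((d:ℤ)*(i:ℤ)))⁻¹ := by
        rw [mul_pow, inv_pow, hsdef, ← zpow_natCast (q^(d:ℤ)) i, ← zpow_mul]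
      have l2 : (x:F)^N = q^(((2*N:ℕ):ℤ)) := by
        rw [hxdef, ← pow_mul, zpow_natCast]
      have l3 : q ^ ((i:ℤ) * ((i:ℤ) - d + 1)) * (q^((d:ℤ)*(i:ℤ)))⁻¹ * q^(((2*N:ℕ):ℤ))
          = q ^ (2*(i:ℤ)*((i:ℤ)-(d:ℤ))) := by
        rw [← zpow_neg, ← zpow_add₀ hq, ← zpow_add₀ hq]
        congr 1
        have h2N' : (i:ℤ)*(i:ℤ) = 2*(N:ℤ) + i := by exact_mod_cast h2N
        push_cast
        linear_combination -h2N'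
      have hL : a^i * q ^ ((i:ℤ) * ((i:ℤ) - d + 1)) * (a*s⁻¹)^i * x^N
          = (a^i * a^i) * q ^ (2*(i:ℤ)*((i:ℤ)-(d:ℤ))) := by
        rw [l1, l2, ← l3]; ring
      have r1 : u^(j-i) = (a^(2*(j-i)))⁻¹ * x^((d-j)*(j-i)) := by
        rw [hudef, mul_pow, inv_pow, ← pow_mul, ← pow_mul]
      have r2 : a^(2*j) * (a^(2*(j-i)))⁻¹ = a^i * a^i := by
        have e : (a:F)^(2*j) = (a^i * a^i) * a^(2*(j-i)) := by
          rw [← pow_add, ← pow_add]; congr 1; omega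
        rw [e, mul_assoc, mul_inv_cancel₀ (pow_ne_zero _ ha), mul_one]
      have r3 : (x:F) ^ ((i:ℤ)*((i:ℤ) - (j:ℤ))) = q ^ (2*((i:ℤ)*((i:ℤ)-(j:ℤ)))) := by
        rw [hxdef, ← zpow_natCast q 2, ← zpow_mul]
        norm_num
      have r4 : (x:F)^((d-j)*(j-i)) = q^((( 2*((d-j)*(j-i)) :ℕ):ℤ)) := by
        rw [hxdef, ← pow_mul, zpow_natCast]
      have r5 : q ^ (2*(j:ℤ) * ((j:ℤ) - d)) * (q ^ (2*((i:ℤ)*((i:ℤ)-(j:ℤ)))) * q^(((2*((d-j)*(j-i)):ℕ):ℤ)))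
          = q ^ (2*(i:ℤ)*((i:ℤ)-(d:ℤ))) := by
        rw [← zpow_add₀ hq, ← zpow_add₀ hq]
        congr 1
        push_cast [Nat.cast_sub hij, Nat.cast_sub hj]
        ring
      have hR : (a^(2*j) * q ^ (2*(j:ℤ) * ((j:ℤ) - d))) *
          (x ^ ((i:ℤ)*((i:ℤ) - (j:ℤ))) * u ^ (j-i))
          = (a^i * a^i) * q ^ (2*(i:ℤ)*((i:ℤ)-(d:ℤ))) := by
        rw [r1, r3, r4, ← r5, ← r2]; ring
      rw [hL, hR]
    -- now the per-term equality
    rw [div_eq_iff (hP i hid)]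
    apply mul_right_cancel₀ (hP (j-i) (by omega))
    rw [Finset.prod_congr rfl (fun k _ => hfac k), Finset.prod_mul_distrib,
      Finset.prod_mul_distrib, Finset.prod_const, Finset.card_range]
    have pA := Stmt13.prodA x j i hij
    have qB := Stmt13.qb_mul x j i hij
    have hsign : (-1:F)^i * (-1)^i = 1 := by rw [← mul_pow]; norm_num
    have hprodx : (∏ k ∈ Finset.range i, (x:F)^k) = x^N := by
      rw [Finset.prod_pow_eq_pow_sum]
    rw [hprodx] at pA
    linear_combination
      ((-1:F)^i * a^i * q ^ ((i:ℤ) * ((i:ℤ) - d + 1)) * (a*s⁻¹)^i *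
        (∏ k ∈ Finset.range i, (1 - u * (x ^ k)⁻¹))) * pA
      - ((a^(2*j) * q ^ (2*(j:ℤ) * ((j:ℤ) - d))) * (x ^ ((i:ℤ)*((i:ℤ) - (j:ℤ))) * u ^ (j-i)) *
        (∏ k ∈ Finset.range i, (1 - u * (x ^ k)⁻¹))) * qB
      + (a^i * q ^ ((i:ℤ) * ((i:ℤ) - d + 1)) * (a*s⁻¹)^i * x^N *
        (∏ k ∈ Finset.range i, (1 - u * (x ^ k)⁻¹)) * qPoch x x j) * hsign
      + ((∏ k ∈ Finset.range i, (1 - u * (x ^ k)⁻¹)) * qPoch x x j) * hscalar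
  -- assemble
  rw [← Finset.sum_subset (Finset.range_subset_range.mpr (by omega : j+1 ≤ d+1)) hvan]
  rw [Finset.sum_congr rfl hterm, ← Finset.mul_sum, Stmt13.key x u hx j, mul_one]
end

section
/- Let V be a finite-dimensional vector space over F, let T ∈ End(V), and suppose there exists v ∈ V such that ⟨T⟩v = V, where ⟨T⟩ is the subalgebra of End(V) generated by T. Then every G ∈ End(V) commuting with T lies in ⟨T⟩. -/
/-! If `f v = G v` for some `f ∈ ⟨T⟩`, then `f` and `G` both commute with every polynomial in `T`,
so they agree on `⟨T⟩ v = V`; hence `G = f ∈ ⟨T⟩`. -/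

namespace Module.End

variable {R M : Type*} [CommSemiring R] [AddCommMonoid M] [Module R M]

theorem eq_of_apply_eq_of_forall_commute {S : Set (Module.End R M)} {v : M}
    (hcyc : ∀ w : M, ∃ g ∈ S, g v = w) {G H : Module.End R M}
    (hG : ∀ g ∈ S, Commute G g) (hH : ∀ g ∈ S, Commute H g) (hv : G v = H v) : G = H := by
  ext w
  obtain ⟨g, hg, rfl⟩ := hcyc w
  calc G (g v) = g (G v) := LinearMap.congr_fun (hG g hg) v
    _ = g (H v) := by rw [hv]
    _ = H (g v) := (LinearMap.congr_fun (hH g hg) v).symm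

end Module.End

theorem stmt_18_general {F V : Type*} [Field F] [AddCommGroup V] [Module F V]
    (T : Module.End F V) (v : V)
    (hcyc : ∀ w : V, ∃ f ∈ Algebra.adjoin F {T}, f v = w) :
    ∀ G : Module.End F V, Commute G T → G ∈ Algebra.adjoin F {T} := by
  intro G hGT
  obtain ⟨f, hf, hfv⟩ := hcyc (G v)
  have hG : ∀ g ∈ Algebra.adjoin F {T}, Commute G g := fun g hg =>
    Algebra.commute_of_mem_adjoin_singleton_of_commute hg hGT
  have hf_comm : ∀ g ∈ Algebra.adjoin F {T}, Commute f g := fun g hg =>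
    Algebra.commute_of_mem_adjoin_singleton_of_commute hg
      (Algebra.commute_of_mem_adjoin_self hf).symm
  rwa [Module.End.eq_of_apply_eq_of_forall_commute hcyc hG hf_comm hfv.symm]

theorem stmt_18 {F V : Type*} [Field F] [AddCommGroup V] [Module F V]
    [FiniteDimensional F V]
    (T : Module.End F V) (v : V)
    (hcyc : ∀ w : V, ∃ f ∈ Algebra.adjoin F {T}, f v = w) :
    ∀ G : Module.End F V, Commute G T → G ∈ Algebra.adjoin F {T} :=
  stmt_18_general T v hcyc
end
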